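/- For every p ≥ 4 there exists a positive semidefinite p×p matrix of rank p−2, vanishing at all nonedges of the cycle C_p, that lies on an extreme ray of the cone S^p_{⪰0}(C_p). Consequently the sparsity order of C_p is at least p−2. -/

import Mathlib

open Matrix BigOperators

/-- The cone of real positive semidefinite matrices with zeros at nonedges of a graph
with adjacency relation `Adj`. -/
def psdCone {n : Type*} [Fintype n] (Adj : n → n → Prop) : Set (Matrix n n ℝ) :=
  {X | X.PosSemidef ∧ ∀ i j, i ≠ j → ¬ Adj i j → X i j = 0}

/-- `X` lies on an extreme ray of the convex cone `S`: it belongs to `S` and whenever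
`X = A + B` with `A, B ∈ S`, both `A` and `B` are nonnegative multiples of `X`. -/
def IsExtremalIn {n : Type*} [Fintype n] (S : Set (Matrix n n ℝ)) (X : Matrix n n ℝ) : Prop :=
  X ∈ S ∧ ∀ A B : Matrix n n ℝ, A ∈ S → B ∈ S → X = A + B →
    (∃ c : ℝ, 0 ≤ c ∧ A = c • X) ∧ (∃ d : ℝ, 0 ≤ d ∧ B = d • X)

/-- Adjacency in the cycle `C_p` on `Fin p`: consecutive mod `p`. -/
def finCycAdj (p : ℕ) (i j : Fin p) : Prop :=
  (j : ℕ) = ((i : ℕ) + 1) % p ∨ (i : ℕ) = ((j : ℕ) + 1) % p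

/-!
Label the vertices of `C_{n+2}` by `0, …, n+1` and let `u_0, …, u_{n+1} ∈ ℝⁿ` be the rows of
`F = CycleFrame.frame n`: `u_i = e_{i-1} + e_i` for `i ≤ n` (with `e_{-1} = e_n = 0`) and
`u_{n+1} = ((-1)^r)_r`. Their Gram matrix `X = F Fᵀ` has rank `n` and vanishes off the edges of
the cycle. If `X = A + B` inside the cone, then `ker X ⊆ ker A`, so `A = F M Fᵀ` for some `M`, and
`M` must be scalar: for `a < b`, `e_a` is a combination of the `u_k` with `k ≤ a` and `e_b` one of
the `u_l` with `b < l ≤ n`, all pairs of nonadjacent vertices, so `M_{ab} = 0`; then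
`u_{i+1}ᵀ M u_{n+1} = 0` forces `M_{ii} = M_{i+1,i+1}`.
-/

namespace Matrix

variable {ι κ R : Type*}

theorem mul_mul_transpose_apply [Fintype κ] [CommSemiring R] (F : Matrix ι κ R)
    (M : Matrix κ κ R) (i j : ι) : (F * M * Fᵀ) i j = F i ⬝ᵥ M *ᵥ F j := by
  simp only [mul_apply, dotProduct, mulVec, transpose_apply, Finset.mul_sum, Finset.sum_mul]
  rw [Finset.sum_comm]
  exact Finset.sum_congr rfl fun _ _ => Finset.sum_congr rfl fun _ _ => by ring

theorem dotProduct_mulVec_eq_zero_of_mem_span [Fintype κ] [CommSemiring R] {M : Matrix κ κ R}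
    {s t : Set (κ → R)} (h : ∀ x ∈ s, ∀ y ∈ t, x ⬝ᵥ M *ᵥ y = 0) {x y : κ → R}
    (hx : x ∈ Submodule.span R s) (hy : y ∈ Submodule.span R t) : x ⬝ᵥ M *ᵥ y = 0 := by
  induction hx using Submodule.span_induction with
  | mem x hx =>
    induction hy using Submodule.span_induction with
    | mem y hy => exact h x hx y hy
    | zero => simp
    | add y z _ _ hy hz => simp [mulVec_add, dotProduct_add, hy, hz]
    | smul c y _ hy => simp [mulVec_smul, hy]
  | zero => simp
  | add x z _ _ hx hz => simp [add_dotProduct, hx, hz]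
  | smul c x _ hx => simp [hx]

open scoped ComplexOrder in
theorem PosSemidef.mulVec_eq_zero_of_posSemidef_sub [Fintype ι] {𝕜 : Type*} [RCLike 𝕜]
    {A B : Matrix ι ι 𝕜} (hA : A.PosSemidef) (hBA : (B - A).PosSemidef) {z : ι → 𝕜}
    (hz : B *ᵥ z = 0) : A *ᵥ z = 0 := by
  have hneg : star z ⬝ᵥ (B - A) *ᵥ z = -(star z ⬝ᵥ A *ᵥ z) := by
    rw [sub_mulVec, dotProduct_sub, hz, dotProduct_zero, zero_sub]
  have hzero : star z ⬝ᵥ A *ᵥ z = 0 :=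
    le_antisymm (neg_nonneg.mp (hneg ▸ hBA.dotProduct_mulVec_nonneg z :))
      (hA.dotProduct_mulVec_nonneg z)
  exact (hA.dotProduct_mulVec_zero_iff z).mp hzero

theorem eq_mul_mul_transpose_of_mulVec_eq_zero [Fintype ι] [Fintype κ] [DecidableEq κ]
    [CommRing R] {A : Matrix ι ι R} (hA : A.IsSymm)
    {F : Matrix ι κ R} {G : Matrix κ ι R} (hGF : G * F = 1)
    (hker : ∀ z, Fᵀ *ᵥ z = 0 → A *ᵥ z = 0) : A = F * (G * A * Gᵀ) * Fᵀ := by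
  have hright : A * (Gᵀ * Fᵀ) = A := by
    refine ext_iff_mulVec.mpr fun z => ?_
    have hz : Fᵀ *ᵥ (z - (Gᵀ * Fᵀ) *ᵥ z) = 0 := by
      rw [mulVec_sub, mulVec_mulVec, ← Matrix.mul_assoc, ← transpose_mul, hGF, transpose_one,
        Matrix.one_mul, sub_self]
    rw [← mulVec_mulVec, eq_comm, ← sub_eq_zero, ← mulVec_sub]
    exact hker _ hz
  have hleft : F * G * A = A := by
    simpa [transpose_mul, hA.eq, Matrix.mul_assoc] using congrArg transpose hright
  calc A = F * G * A * (Gᵀ * Fᵀ) := by rw [hleft, hright]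
    _ = F * (G * A * Gᵀ) * Fᵀ := by simp only [Matrix.mul_assoc]

theorem rank_eq_card_of_mul_eq_one [Fintype ι] [Fintype κ] [Field R] [DecidableEq κ]
    {F : Matrix ι κ R} {G : Matrix κ ι R} (hGF : G * F = 1) : F.rank = Fintype.card κ :=
  le_antisymm F.rank_le_card_width (by simpa [hGF] using rank_mul_le_right G F)

end Matrix

section Extremality

variable {ι κ : Type*} [Fintype ι] [Fintype κ] [DecidableEq κ]

def IsRigidFrame (Adj : ι → ι → Prop) (F : Matrix ι κ ℝ) : Prop :=
  ∀ M : Matrix κ κ ℝ,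
    (∀ i j, i ≠ j → ¬ Adj i j → (F * M * Fᵀ) i j = 0) → ∃ c : ℝ, M = c • 1

variable {Adj : ι → ι → Prop} {F : Matrix ι κ ℝ} {G : Matrix κ ι ℝ}

theorem eq_smul_of_mem_psdCone_of_posSemidef_sub [Nonempty κ] (hGF : G * F = 1)
    (hrigid : IsRigidFrame Adj F) {A : Matrix ι ι ℝ} (hA : A ∈ psdCone Adj)
    (hsub : (F * Fᵀ - A).PosSemidef) : ∃ c : ℝ, 0 ≤ c ∧ A = c • (F * Fᵀ) := by
  obtain ⟨hApsd, hAzero⟩ := hA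
  have hrepr : A = F * (G * A * Gᵀ) * Fᵀ := by
    refine eq_mul_mul_transpose_of_mulVec_eq_zero (isHermitian_iff_isSymm.mp hApsd.isHermitian)
      hGF fun z hz => hApsd.mulVec_eq_zero_of_posSemidef_sub hsub ?_
    rw [← mulVec_mulVec, hz, mulVec_zero]
  obtain ⟨c, hc⟩ := hrigid _ fun i j hij hadj => hrepr ▸ hAzero i j hij hadj
  have hc_nonneg : 0 ≤ c := by
    have hdiag := (hApsd.mul_mul_conjTranspose_same G).diag_nonneg (i := Classical.arbitrary κ)
    simpa [conjTranspose_eq_transpose_of_trivial, hc] using hdiag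
  refine ⟨c, hc_nonneg, ?_⟩
  rw [hrepr, hc, Matrix.mul_smul, Matrix.mul_one, Matrix.smul_mul]

theorem isExtremalIn_psdCone_mul_transpose [Nonempty κ] (hGF : G * F = 1)
    (hF : F * Fᵀ ∈ psdCone Adj) (hrigid : IsRigidFrame Adj F) :
    IsExtremalIn (psdCone Adj) (F * Fᵀ) := by
  refine ⟨hF, fun A B hA hB hsum => ⟨?_, ?_⟩⟩
  · exact eq_smul_of_mem_psdCone_of_posSemidef_sub hGF hrigid hA (by simpa [hsum] using hB.1)
  · exact eq_smul_of_mem_psdCone_of_posSemidef_sub hGF hrigid hB (by simpa [hsum] using hA.1)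

end Extremality

theorem finCycAdj_iff {p : ℕ} {i j : Fin p} :
    finCycAdj p i j ↔ (i : ℕ) + 1 = j ∨ (j : ℕ) + 1 = i ∨
      ((i : ℕ) + 1 = p ∧ (j : ℕ) = 0) ∨ ((j : ℕ) + 1 = p ∧ (i : ℕ) = 0) := by
  have hsucc (a : Fin p) :
      ((a : ℕ) + 1) % p = if (a : ℕ) + 1 = p then 0 else (a : ℕ) + 1 := by
    split_ifs with h
    · rw [h, Nat.mod_self]
    · exact Nat.mod_eq_of_lt (by omega)
  unfold finCycAdj
  rw [hsucc, hsucc]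
  split_ifs <;> omega

theorem finCycAdj_comm {p : ℕ} {i j : Fin p} : finCycAdj p i j ↔ finCycAdj p j i :=
  or_comm

namespace CycleFrame

variable {n : ℕ}

/-- `e_t`, which is `0` for `t ≥ n`. -/
def stdVec (n t : ℕ) : Fin n → ℝ := fun r => if (r : ℕ) = t then 1 else 0

def pathVec (n : ℕ) : ℕ → Fin n → ℝ
  | 0 => stdVec n 0
  | i + 1 => stdVec n i + stdVec n (i + 1)

def altVec (n : ℕ) : Fin n → ℝ := fun r => (-1) ^ (r : ℕ)

def frame (n : ℕ) : Matrix (Fin (n + 2)) (Fin n) ℝ :=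
  Matrix.of fun i => if (i : ℕ) ≤ n then pathVec n i else altVec n

theorem stdVec_eq_single {t : ℕ} (ht : t < n) : stdVec n t = Pi.single ⟨t, ht⟩ 1 := by
  funext r
  simp [stdVec, Pi.single_apply, Fin.ext_iff]

theorem stdVec_of_le {t : ℕ} (ht : n ≤ t) : stdVec n t = 0 := by
  funext r
  simp only [stdVec, Pi.zero_apply, ite_eq_right_iff, one_ne_zero]
  omega

theorem stdVec_dotProduct {t : ℕ} (ht : t < n) (w : Fin n → ℝ) :
    stdVec n t ⬝ᵥ w = w ⟨t, ht⟩ := by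
  rw [stdVec_eq_single ht, single_dotProduct, one_mul]

theorem stdVec_dotProduct_stdVec {s t : ℕ} (hst : s ≠ t) : stdVec n s ⬝ᵥ stdVec n t = 0 :=
  Finset.sum_eq_zero fun r _ => by simp only [stdVec]; split_ifs <;> first | omega | simp

theorem pathVec_dotProduct_pathVec {k l : ℕ} (hkl : k + 2 ≤ l) :
    pathVec n k ⬝ᵥ pathVec n l = 0 := by
  obtain ⟨l, rfl⟩ : ∃ l', l = l' + 1 := ⟨l - 1, by omega⟩
  cases k <;>
    simp (disch := omega) only [pathVec, add_dotProduct, dotProduct_add, stdVec_dotProduct_stdVec,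
      add_zero]

theorem pathVec_dotProduct_altVec {i : ℕ} (hi : i + 1 < n) :
    pathVec n (i + 1) ⬝ᵥ altVec n = 0 := by
  rw [pathVec, add_dotProduct, stdVec_dotProduct (by omega), stdVec_dotProduct hi]
  simp [altVec, pow_succ]

theorem frame_of_le {i : Fin (n + 2)} (hi : (i : ℕ) ≤ n) : frame n i = pathVec n i :=
  if_pos hi

theorem frame_last : frame n (Fin.last (n + 1)) = altVec n :=
  if_neg (by simp)

theorem frame_dotProduct_eq_zero {i j : Fin (n + 2)} (hij : (i : ℕ) < j)
    (hadj : ¬ finCycAdj (n + 2) i j) : frame n i ⬝ᵥ frame n j = 0 := by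
  rw [finCycAdj_iff] at hadj
  rw [frame_of_le (by omega : (i : ℕ) ≤ n)]
  rcases Nat.lt_or_ge (j : ℕ) (n + 1) with hj | hj
  · rw [frame_of_le (by omega : (j : ℕ) ≤ n)]
    exact pathVec_dotProduct_pathVec (by omega)
  · have hj' : (j : ℕ) = n + 1 := by omega
    obtain ⟨i', hi'⟩ : ∃ i', (i : ℕ) = i' + 1 := ⟨(i : ℕ) - 1, by omega⟩
    rw [show j = Fin.last (n + 1) from Fin.ext hj', frame_last, hi']
    exact pathVec_dotProduct_altVec (by omega)

theorem frame_mul_transpose_mem_psdCone :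
    frame n * (frame n)ᵀ ∈ psdCone (finCycAdj (n + 2)) := by
  refine ⟨by simpa [conjTranspose_eq_transpose_of_trivial] using
    posSemidef_self_mul_conjTranspose (frame n), fun i j hij hadj => ?_⟩
  show frame n i ⬝ᵥ frame n j = 0
  rcases lt_or_gt_of_ne (Fin.val_ne_of_ne hij) with hlt | hlt
  · exact frame_dotProduct_eq_zero hlt hadj
  · rw [dotProduct_comm]
    exact frame_dotProduct_eq_zero hlt (finCycAdj_comm.not.mp hadj)

theorem stdVec_mem_span_pathVec_Iic (a : ℕ) :
    stdVec n a ∈ Submodule.span ℝ (pathVec n '' Set.Iic a) := by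
  induction a with
  | zero => exact Submodule.subset_span ⟨0, Set.mem_Iic.mpr le_rfl, rfl⟩
  | succ a ih =>
    have hsub : stdVec n (a + 1) = pathVec n (a + 1) - stdVec n a := by simp [pathVec]
    rw [hsub]
    exact sub_mem (Submodule.subset_span ⟨a + 1, Set.mem_Iic.mpr le_rfl, rfl⟩)
      (Submodule.span_mono (Set.image_mono (Set.Iic_subset_Iic.mpr a.le_succ)) ih)

theorem stdVec_mem_span_pathVec_Ioc {a : ℕ} (ha : a ≤ n) :
    stdVec n a ∈ Submodule.span ℝ (pathVec n '' Set.Ioc a n) := by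
  refine Nat.decreasingInduction
    (motive := fun a _ => stdVec n a ∈ Submodule.span ℝ (pathVec n '' Set.Ioc a n))
    (fun a ha ih => ?_) (by rw [stdVec_of_le le_rfl]; exact zero_mem _) ha
  have hsub : stdVec n a = pathVec n (a + 1) - stdVec n (a + 1) := by simp [pathVec]
  rw [hsub]
  exact sub_mem (Submodule.subset_span ⟨a + 1, ⟨by omega, by omega⟩, rfl⟩)
    (Submodule.span_mono (Set.image_mono (Set.Ioc_subset_Ioc_left a.le_succ)) ih)

theorem exists_mul_frame_eq_one : ∃ G : Matrix (Fin n) (Fin (n + 2)) ℝ, G * frame n = 1 := by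
  refine vecMul_surjective_iff_exists_left_inverse.mp ?_
  have hspan : Submodule.span ℝ (Set.range (frame n).row) = ⊤ := by
    rw [eq_top_iff, ← (Pi.basisFun ℝ (Fin n)).span_eq, Submodule.span_le]
    rintro _ ⟨a, rfl⟩
    rw [Pi.basisFun_apply, ← stdVec_eq_single a.isLt]
    refine Submodule.span_mono ?_ (stdVec_mem_span_pathVec_Iic a)
    rintro _ ⟨k, hk, rfl⟩
    rw [Set.mem_Iic] at hk
    exact ⟨⟨k, by omega⟩, frame_of_le (by simp only; omega)⟩
  rwa [← range_vecMulLinear, LinearMap.range_eq_top] at hspan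

theorem eq_zero_of_ne_of_pathVec_dotProduct_mulVec {M : Matrix (Fin n) (Fin n) ℝ}
    (hpath : ∀ k l, k ≤ n → l ≤ n → k + 2 ≤ l ∨ l + 2 ≤ k →
      pathVec n k ⬝ᵥ M *ᵥ pathVec n l = 0)
    {a b : Fin n} (hab : a ≠ b) : M a b = 0 := by
  have hentry : M a b = stdVec n a ⬝ᵥ M *ᵥ stdVec n b := by
    rw [stdVec_dotProduct a.isLt, stdVec_eq_single b.isLt, mulVec_single_one]
    rfl
  rw [hentry]
  rcases lt_or_gt_of_ne (Fin.val_ne_of_ne hab) with hlt | hlt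
  · refine dotProduct_mulVec_eq_zero_of_mem_span ?_ (stdVec_mem_span_pathVec_Iic a)
      (stdVec_mem_span_pathVec_Ioc b.isLt.le)
    rintro _ ⟨k, hk, rfl⟩ _ ⟨l, hl, rfl⟩
    simp only [Set.mem_Iic, Set.mem_Ioc] at hk hl
    exact hpath k l (by omega) hl.2 (by omega)
  · refine dotProduct_mulVec_eq_zero_of_mem_span ?_ (stdVec_mem_span_pathVec_Ioc a.isLt.le)
      (stdVec_mem_span_pathVec_Iic b)
    rintro _ ⟨k, hk, rfl⟩ _ ⟨l, hl, rfl⟩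
    simp only [Set.mem_Iic, Set.mem_Ioc] at hk hl
    exact hpath k l hk.2 (by omega) (by omega)

theorem diag_succ_eq_of_pathVec_dotProduct_altVec {M : Matrix (Fin n) (Fin n) ℝ}
    (hoff : ∀ a b, a ≠ b → M a b = 0) {i : ℕ} (hi : i + 1 < n)
    (h : pathVec n (i + 1) ⬝ᵥ M *ᵥ altVec n = 0) :
    M ⟨i + 1, hi⟩ ⟨i + 1, hi⟩ = M ⟨i, by omega⟩ ⟨i, by omega⟩ := by
  have hMv : M *ᵥ altVec n = fun r => M r r * (-1) ^ (r : ℕ) := by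
    funext r
    show ∑ s, M r s * altVec n s = _
    rw [Finset.sum_eq_single r (fun s _ hs => by rw [hoff r s (Ne.symm hs), zero_mul])
      (by simp)]
    rfl
  rw [hMv, pathVec, add_dotProduct, stdVec_dotProduct (by omega), stdVec_dotProduct hi,
    pow_succ] at h
  rcases neg_one_pow_eq_or ℝ i with hsign | hsign <;> rw [hsign] at h <;> linarith

theorem isRigidFrame_frame (hn : 0 < n) : IsRigidFrame (finCycAdj (n + 2)) (frame n) := by
  intro M hM
  have hframe : ∀ i j, i ≠ j → ¬ finCycAdj (n + 2) i j →
      frame n i ⬝ᵥ M *ᵥ frame n j = 0 := fun i j hij hadj =>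
    mul_mul_transpose_apply (frame n) M i j ▸ hM i j hij hadj
  have hpath : ∀ k l, k ≤ n → l ≤ n → k + 2 ≤ l ∨ l + 2 ≤ k →
      pathVec n k ⬝ᵥ M *ᵥ pathVec n l = 0 := by
    intro k l hk hl hkl
    have h := hframe ⟨k, by omega⟩ ⟨l, by omega⟩ (by simp only [ne_eq, Fin.mk.injEq]; omega)
      (by simp only [finCycAdj_iff]; omega)
    rwa [frame_of_le hk, frame_of_le hl] at h
  have hoff := fun a b => eq_zero_of_ne_of_pathVec_dotProduct_mulVec hpath (a := a) (b := b)
  have hdiag : ∀ i (hi : i < n), M ⟨i, hi⟩ ⟨i, hi⟩ = M ⟨0, hn⟩ ⟨0, hn⟩ := by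
    intro i
    induction i with
    | zero => exact fun _ => rfl
    | succ i ih =>
      intro hi
      refine (diag_succ_eq_of_pathVec_dotProduct_altVec hoff hi ?_).trans (ih (by omega))
      have h := hframe ⟨i + 1, by omega⟩ (Fin.last (n + 1)) (by simp only [ne_eq, Fin.ext_iff, Fin.val_last]; omega)
        (by simp only [finCycAdj_iff, Fin.val_last]; omega)
      rwa [frame_of_le (by simp only; omega), frame_last] at h
  refine ⟨M ⟨0, hn⟩ ⟨0, hn⟩, Matrix.ext fun a b => ?_⟩
  by_cases hab : a = b
  · subst hab
    simpa using hdiag a a.isLt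
  · simp [hab, hoff a b hab]

end CycleFrame

open CycleFrame

theorem cycle_has_extremal_rank_p_sub_two (p : ℕ) (hp : 4 ≤ p) :
    ∃ X : Matrix (Fin p) (Fin p) ℝ,
      X ∈ psdCone (finCycAdj p) ∧ X.rank = p - 2 ∧
      IsExtremalIn (psdCone (finCycAdj p)) X := by
  obtain ⟨n, rfl⟩ : ∃ n, p = n + 2 := ⟨p - 2, by omega⟩
  obtain ⟨G, hGF⟩ := exists_mul_frame_eq_one (n := n)
  have : Nonempty (Fin n) := ⟨⟨0, by omega⟩⟩
  refine ⟨frame n * (frame n)ᵀ, frame_mul_transpose_mem_psdCone, ?_,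
    isExtremalIn_psdCone_mul_transpose hGF frame_mul_transpose_mem_psdCone
      (isRigidFrame_frame (by omega))⟩
  rw [rank_self_mul_transpose, rank_eq_card_of_mul_eq_one hGF, Fintype.card_fin]
  omega
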